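/- For D ∈ L(K,H) with ‖D‖ = 1 and s, t ∈ ℝ, one has M_{-Th(sD)}(Th(tD)) = Th((t-s)D). Consequently, ρ(Th(sD), Th(tD)) = |t-s| where ρ(A,B) = tanh^{-1}‖M_{-A}(B)‖, so the curve t ↦ Th(tD) is a metric line in (B, ρ). -/

import Mathlib

/-!
Write `T = |D|`. Every operator involved has the form `J ∘ f(T)` with `f` continuous and
`f 0 = 0`, and `J*J` fixes all of these because it fixes `T`. Hence `A*X` and `A*A` are functions
of `T`, and `1 - AA*` intertwines `J ∘ c(T)` with `1 - a(T)²`; by Weierstrass approximation the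
intertwining passes to `(·)^{-1/2}`. So the operator Möbius map is computed by the scalar one,
`M_{J a(T)}(J b(T)) = J ((a + b) / (1 + ab))(T)`, and for `a = -tanh(s·)`, `b = tanh(t·)` the
subtraction formula for `tanh` gives `J tanh((t - s)T)`. Its norm is `tanh |t - s|` since the
spectrum of `T` lies in `[0, ‖D‖] = [0, 1]` and contains `‖D‖ = 1`.
-/

open ContinuousLinearMap

variable {K H : Type*}
  [NormedAddCommGroup H] [InnerProductSpace ℂ H] [CompleteSpace H]
  [NormedAddCommGroup K] [InnerProductSpace ℂ K] [CompleteSpace K]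

/-- The square root of a (positive) operator, via continuous functional calculus. -/
noncomputable def opSqrt {E : Type*} [NormedAddCommGroup E] [InnerProductSpace ℂ E]
    [CompleteSpace E] (T : E →L[ℂ] E) : E →L[ℂ] E := cfc Real.sqrt T

/-- The inverse square root of a (positive invertible) operator. -/
noncomputable def opInvSqrt {E : Type*} [NormedAddCommGroup E] [InnerProductSpace ℂ E]
    [CompleteSpace E] (T : E →L[ℂ] E) : E →L[ℂ] E := cfc (fun x : ℝ => (Real.sqrt x)⁻¹) T

/-- The absolute value |D| = (D*D)^{1/2} of an operator D : K → H. -/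
noncomputable def absOp (D : K →L[ℂ] H) : K →L[ℂ] K := opSqrt (adjoint D ∘L D)

/-- The Möbius transformation M_A(X) = (1-AA*)^{-1/2}(A+X)(1+A*X)^{-1}(1-A*A)^{1/2}. -/
noncomputable def mobius (A X : K →L[ℂ] H) : K →L[ℂ] H :=
  opInvSqrt (1 - A ∘L adjoint A) ∘L (A + X) ∘L
    Ring.inverse (1 + adjoint A ∘L X) ∘L opSqrt (1 - adjoint A ∘L A)

/-- Inverse hyperbolic tangent. -/
noncomputable def artanh (x : ℝ) : ℝ := Real.log ((1 + x) / (1 - x)) / 2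

namespace Real

theorem tanh_le_tanh {x y : ℝ} (h : x ≤ y) : tanh x ≤ tanh y := by
  rwa [← artanh_le_artanh_iff ⟨neg_one_lt_tanh x, tanh_lt_one x⟩
    ⟨neg_one_lt_tanh y, tanh_lt_one y⟩, artanh_tanh, artanh_tanh]

theorem tanh_nonneg {x : ℝ} (hx : 0 ≤ x) : 0 ≤ tanh x :=
  tanh_zero ▸ tanh_le_tanh hx

theorem abs_tanh (x : ℝ) : |tanh x| = tanh |x| := by
  rcases le_total 0 x with hx | hx
  · rw [abs_of_nonneg hx, abs_of_nonneg (tanh_nonneg hx)]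
  · rw [abs_of_nonpos hx, abs_of_nonpos (by simpa using tanh_nonneg (neg_nonneg.2 hx)), tanh_neg]

theorem tanh_sub (x y : ℝ) : tanh (x - y) = (tanh x - tanh y) / (1 - tanh x * tanh y) := by
  have hx := (cosh_pos x).ne'
  have hy := (cosh_pos y).ne'
  have hxy : cosh x * cosh y - sinh x * sinh y ≠ 0 := by
    rw [← cosh_sub]; exact (cosh_pos _).ne'
  simp only [tanh_eq_sinh_div_cosh, sinh_sub, cosh_sub]
  field_simp

@[fun_prop]
theorem continuous_tanh : Continuous tanh := by
  simp only [funext tanh_eq_sinh_div_cosh]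
  exact continuous_sinh.div continuous_cosh fun x => (cosh_pos x).ne'

end Real

theorem one_sub_mul_self_pos {r : ℝ} (hr : |r| < 1) : 0 < 1 - r * r := by
  nlinarith [abs_mul_abs_self r, abs_nonneg r]

theorem artanh_eq_real_artanh {x : ℝ} (hx : x ∈ Set.Icc (-1) 1) : artanh x = Real.artanh x := by
  rw [artanh, Real.artanh_eq_half_log hx]
  ring

theorem artanh_tanh (x : ℝ) : artanh (Real.tanh x) = x := by
  rw [artanh_eq_real_artanh ⟨(Real.neg_one_lt_tanh x).le, (Real.tanh_lt_one x).le⟩,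
    Real.artanh_tanh]

section Intertwining

variable {E F G : Type*}
  [NormedAddCommGroup E] [InnerProductSpace ℂ E]
  [NormedAddCommGroup F] [InnerProductSpace ℂ F]
  [NormedAddCommGroup G] [InnerProductSpace ℂ G]

theorem aeval_comp_eq_comp_aeval {S : F →L[ℂ] F} {T : E →L[ℂ] E} {V : E →L[ℂ] F}
    (hV : S ∘L V = V ∘L T) (q : Polynomial ℝ) :
    Polynomial.aeval S q ∘L V = V ∘L Polynomial.aeval T q := by
  have hpow (n : ℕ) : (S ^ n) ∘L V = V ∘L (T ^ n) := by
    induction n with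
    | zero => rfl
    | succ n ih =>
      rw [pow_succ, pow_succ, mul_def, mul_def, comp_assoc, hV, ← comp_assoc, ih, comp_assoc]
  induction q using Polynomial.induction_on' with
  | add p q hp hq => rw [map_add, map_add, add_comp, comp_add, hp, hq]
  | monomial n r =>
    simp only [Polynomial.aeval_monomial, Algebra.algebraMap_eq_smul_one, smul_one_mul,
      smul_comp, comp_smul, hpow]

variable [CompleteSpace E] [CompleteSpace F] [CompleteSpace G]

theorem abs_le_norm_of_mem_spectrum {T : E →L[ℂ] E} {x : ℝ} (hx : x ∈ spectrum ℝ T) :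
    |x| ≤ ‖T‖ :=
  (spectrum.norm_le_norm_mul_of_mem hx).trans
    (mul_le_of_le_one_right (norm_nonneg T) norm_id_le)

theorem pos_of_mem_spectrum_one_sub {T : E →L[ℂ] E} (hT : ‖T‖ < 1) {y : ℝ}
    (hy : y ∈ spectrum ℝ (1 - T)) : 0 < y := by
  rw [← map_one (algebraMap ℝ (E →L[ℂ] E)), ← spectrum.singleton_sub_eq] at hy
  obtain ⟨_, rfl, z, hz, rfl⟩ := hy
  linarith [le_abs_self z, abs_le_norm_of_mem_spectrum hz]

theorem norm_cfc_sub_aeval_le {A : Type*} [CStarAlgebra A] {a : A} (ha : IsSelfAdjoint a)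
    {g : ℝ → ℝ} (hg : Continuous g) {s : Set ℝ} (hs : spectrum ℝ a ⊆ s) {q : Polynomial ℝ}
    {δ : ℝ} (hδ : 0 ≤ δ) (hq : ∀ x ∈ s, |q.eval x - g x| ≤ δ) :
    ‖cfc g a - Polynomial.aeval a q‖ ≤ δ := by
  rw [← cfc_polynomial q a, ← cfc_sub g _ a]
  refine norm_cfc_le hδ fun x hx => ?_
  rw [Real.norm_eq_abs, abs_sub_comm]
  exact hq x (hs hx)

theorem cfc_comp_eq_comp_cfc_of_continuous {S : F →L[ℂ] F} {T : E →L[ℂ] E} {V : E →L[ℂ] F}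
    (hS : IsSelfAdjoint S) (hT : IsSelfAdjoint T) (hV : S ∘L V = V ∘L T)
    {g : ℝ → ℝ} (hg : Continuous g) : cfc g S ∘L V = V ∘L cfc g T := by
  set M := max ‖S‖ ‖T‖
  have hS_sub : spectrum ℝ S ⊆ Set.Icc (-M) M := fun x hx =>
    abs_le.1 ((abs_le_norm_of_mem_spectrum hx).trans (le_max_left _ _))
  have hT_sub : spectrum ℝ T ⊆ Set.Icc (-M) M := fun x hx =>
    abs_le.1 ((abs_le_norm_of_mem_spectrum hx).trans (le_max_right _ _))
  rw [← sub_eq_zero, ← norm_le_zero_iff]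
  refine le_of_forall_pos_le_add fun ε hε => ?_
  set δ := ε / (2 * ‖V‖ + 1)
  have hδ : 0 < δ := by positivity
  -- both sides move by at most `δ * ‖V‖` when `g` is replaced by a polynomial `δ`-close to it
  obtain ⟨q, hq⟩ := exists_polynomial_near_of_continuousOn (-M) M g hg.continuousOn δ hδ
  have hq' : ∀ x ∈ Set.Icc (-M) M, |q.eval x - g x| ≤ δ := fun x hx => (hq x hx).le
  have hS_approx := norm_cfc_sub_aeval_le hS hg hS_sub hδ.le hq'
  have hT_approx := norm_cfc_sub_aeval_le hT hg hT_sub hδ.le hq'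
  have hsplit : cfc g S ∘L V - V ∘L cfc g T
      = (cfc g S - Polynomial.aeval S q) ∘L V - V ∘L (cfc g T - Polynomial.aeval T q) := by
    rw [sub_comp, comp_sub, aeval_comp_eq_comp_aeval hV]
    abel
  calc ‖cfc g S ∘L V - V ∘L cfc g T‖
      ≤ δ * ‖V‖ + ‖V‖ * δ := by
        rw [hsplit]
        refine (norm_sub_le _ _).trans (add_le_add ?_ ?_)
        · exact (opNorm_comp_le _ _).trans (mul_le_mul_of_nonneg_right hS_approx (norm_nonneg V))
        · exact (opNorm_comp_le _ _).trans (mul_le_mul_of_nonneg_left hT_approx (norm_nonneg V))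
    _ ≤ (2 * ‖V‖ + 1) * δ := by nlinarith
    _ = 0 + ε := by simp only [δ]; field_simp; ring

theorem cfc_comp_eq_comp_cfc {S : F →L[ℂ] F} {T : E →L[ℂ] E} {V : E →L[ℂ] F}
    (hS : IsSelfAdjoint S) (hT : IsSelfAdjoint T) (hV : S ∘L V = V ∘L T)
    {g : ℝ → ℝ} (hg : ContinuousOn g (spectrum ℝ S ∪ spectrum ℝ T)) :
    cfc g S ∘L V = V ∘L cfc g T := by
  have hclosed : IsClosed (spectrum ℝ S ∪ spectrum ℝ T) :=
    (spectrum.isClosed S).union (spectrum.isClosed T)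
  obtain ⟨g', hg'⟩ := ContinuousMap.exists_restrict_eq hclosed ⟨_, hg.domRestrict⟩
  have hgg' : (spectrum ℝ S ∪ spectrum ℝ T).EqOn g g' := fun x hx =>
    (DFunLike.congr_fun hg' ⟨x, hx⟩).symm
  rw [cfc_congr (hgg'.mono Set.subset_union_left), cfc_congr (hgg'.mono Set.subset_union_right)]
  exact cfc_comp_eq_comp_cfc_of_continuous hS hT hV g'.continuous

theorem comp_cfc_eq_of_comp_eq {W T : E →L[ℂ] E} (hT : IsSelfAdjoint T) (hW : W ∘L T = T)
    {g : ℝ → ℝ} (hg : Continuous g) (hg0 : g 0 = 0) : W ∘L cfc g T = cfc g T := by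
  -- `W - 1` intertwines `T` with `0`, and `cfc g 0 = g 0 = 0`
  have hzero : cfc g (0 : E →L[ℂ] E) = 0 := by simp [hg0]
  have h := cfc_comp_eq_comp_cfc (V := W - 1) (.zero _) hT
    (by rw [zero_comp, sub_comp, hW, one_def, id_comp, sub_self]) hg.continuousOn
  rw [hzero, zero_comp, sub_comp, one_def, id_comp] at h
  exact sub_eq_zero.1 h.symm

theorem norm_comp_eq_of_adjoint_comp_comp_eq {J : E →L[ℂ] F} {C : G →L[ℂ] E}
    (h : adjoint J ∘L J ∘L C = C) : ‖J ∘L C‖ = ‖C‖ := by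
  have hsq : ‖J ∘L C‖ * ‖J ∘L C‖ = ‖C‖ * ‖C‖ := by
    rw [← norm_adjoint_comp_self, ← norm_adjoint_comp_self C, adjoint_comp, comp_assoc, h]
  exact (mul_self_inj (norm_nonneg _) (norm_nonneg _)).1 hsq

end Intertwining

section Mobius

variable {T : K →L[ℂ] K} {J : K →L[ℂ] H}

theorem adjoint_comp_comp_cfc (hT : IsSelfAdjoint T) (hJ : adjoint J ∘L J ∘L T = T)
    {f : ℝ → ℝ} (hf : Continuous f) (hf0 : f 0 = 0) :
    adjoint J ∘L J ∘L cfc f T = cfc f T := by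
  rw [← comp_assoc]
  exact comp_cfc_eq_of_comp_eq hT ((comp_assoc _ _ _).trans hJ) hf hf0

theorem adjoint_comp_cfc_comp_comp_cfc (hT : IsSelfAdjoint T) (hJ : adjoint J ∘L J ∘L T = T)
    {f g : ℝ → ℝ} (hf : Continuous f) (hg : Continuous g) (hg0 : g 0 = 0) :
    adjoint (J ∘L cfc f T) ∘L J ∘L cfc g T = cfc (fun x => f x * g x) T := by
  rw [adjoint_comp, (cfc_predicate f T).adjoint_eq, comp_assoc,
    adjoint_comp_comp_cfc hT hJ hg hg0, cfc_mul f g T, mul_def]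

theorem opInvSqrt_one_sub_comp_adjoint_comp_cfc (hT : IsSelfAdjoint T)
    (hJ : adjoint J ∘L J ∘L T = T) {a c : ℝ → ℝ} (ha : Continuous a) (ha0 : a 0 = 0)
    (ha1 : ∀ x ∈ spectrum ℝ T, |a x| < 1) (hc : Continuous c) (hc0 : c 0 = 0) :
    opInvSqrt (1 - (J ∘L cfc a T) ∘L adjoint (J ∘L cfc a T)) ∘L J ∘L cfc c T
      = (J ∘L cfc c T) ∘L cfc (fun x => (√(1 - a x * a x))⁻¹) T := by
  set A := J ∘L cfc a T
  set S := 1 - A ∘L adjoint A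
  set R := cfc (fun x => 1 - a x * a x) T
  have hSR : S ∘L J ∘L cfc c T = (J ∘L cfc c T) ∘L R := by
    have hAA : A ∘L adjoint A ∘L J ∘L cfc c T = J ∘L cfc (fun x => a x * (a x * c x)) T := by
      rw [adjoint_comp_cfc_comp_comp_cfc hT hJ ha hc hc0, comp_assoc, ← mul_def,
        ← cfc_mul a _ T]
    rw [sub_comp, one_def, id_comp, comp_assoc, hAA, comp_assoc, ← mul_def, ← cfc_mul c _ T,
      ← comp_sub, ← cfc_sub c _ T]
    congr 2
    funext x
    ring
  have hA : ‖A‖ < 1 := by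
    rw [norm_comp_eq_of_adjoint_comp_comp_eq (adjoint_comp_comp_cfc hT hJ ha ha0)]
    exact norm_cfc_lt one_pos ha1
  have hS_pos : ∀ y ∈ spectrum ℝ S, 0 < y := fun y => pos_of_mem_spectrum_one_sub <| by
    have hAA := norm_adjoint_comp_self (adjoint A)
    rw [adjoint_adjoint, LinearIsometryEquiv.norm_map] at hAA
    rw [hAA]
    nlinarith [norm_nonneg A]
  have hR_pos : ∀ y ∈ spectrum ℝ R, 0 < y := by
    rw [cfc_map_spectrum _ T]
    rintro _ ⟨x, hx, rfl⟩
    exact one_sub_mul_self_pos (ha1 x hx)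
  have hS : IsSelfAdjoint S := .sub (.one _) (isPositive_self_comp_adjoint A).isSelfAdjoint
  have hinvsqrt : ContinuousOn (fun y : ℝ => (√y)⁻¹) (spectrum ℝ S ∪ spectrum ℝ R) :=
    Real.continuous_sqrt.continuousOn.inv₀ fun y hy =>
      (Real.sqrt_pos.2 (hy.elim (hS_pos y) (hR_pos y))).ne'
  have hR_spec : (fun x => 1 - a x * a x) '' spectrum ℝ T ⊆ spectrum ℝ S ∪ spectrum ℝ R :=
    (cfc_map_spectrum _ T).symm.subset.trans Set.subset_union_right
  rw [opInvSqrt, cfc_comp_eq_comp_cfc hS (cfc_predicate _ T) hSR hinvsqrt,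
    cfc_comp' (fun y => (√y)⁻¹) _ T (hinvsqrt.mono hR_spec)]

theorem mobius_comp_cfc (hT : IsSelfAdjoint T) (hJ : adjoint J ∘L J ∘L T = T)
    {a b : ℝ → ℝ} (ha : Continuous a) (hb : Continuous b) (ha0 : a 0 = 0) (hb0 : b 0 = 0)
    (ha1 : ∀ x ∈ spectrum ℝ T, |a x| < 1) (hab : ∀ x ∈ spectrum ℝ T, 1 + a x * b x ≠ 0) :
    mobius (J ∘L cfc a T) (J ∘L cfc b T)
      = J ∘L cfc (fun x => (a x + b x) / (1 + a x * b x)) T := by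
  have hsum : J ∘L cfc a T + J ∘L cfc b T = J ∘L cfc (fun x => a x + b x) T := by
    rw [cfc_add T a b, comp_add]
  have hden : Ring.inverse (1 + adjoint (J ∘L cfc a T) ∘L J ∘L cfc b T)
      = cfc (fun x => (1 + a x * b x)⁻¹) T := by
    rw [adjoint_comp_cfc_comp_comp_cfc hT hJ ha hb hb0, cfc_inv (fun x => 1 + a x * b x) T hab,
      cfc_const_add 1 _ T, map_one]
  have hsqrt : opSqrt (1 - adjoint (J ∘L cfc a T) ∘L J ∘L cfc a T)
      = cfc (fun x => √(1 - a x * a x)) T := by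
    rw [adjoint_comp_cfc_comp_comp_cfc hT hJ ha ha ha0, opSqrt, ← cfc_const_one ℝ T,
      ← cfc_sub (fun _ => 1) (fun x => a x * a x) T,
      ← cfc_comp' Real.sqrt (fun x => 1 - a x * a x) T]
  have hinv := opInvSqrt_one_sub_comp_adjoint_comp_cfc hT hJ ha ha0 ha1
    (c := fun x => a x + b x) (by fun_prop) (by simp [ha0, hb0])
  have hne : ∀ x ∈ spectrum ℝ T, √(1 - a x * a x) ≠ 0 := fun x hx =>
    (Real.sqrt_pos.2 (one_sub_mul_self_pos (ha1 x hx))).ne'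
  have hden_cont : ContinuousOn (fun x => (1 + a x * b x)⁻¹) (spectrum ℝ T) :=
    (continuous_const.add (ha.mul hb)).continuousOn.inv₀ hab
  have hinv_cont : ContinuousOn (fun x => (√(1 - a x * a x))⁻¹) (spectrum ℝ T) :=
    (by fun_prop : Continuous fun x => √(1 - a x * a x)).continuousOn.inv₀ hne
  have hsum_cont : ContinuousOn (fun x => a x + b x) (spectrum ℝ T) := by fun_prop
  have hsqrt_cont : ContinuousOn (fun x => √(1 - a x * a x)) (spectrum ℝ T) := by fun_prop
  rw [mobius, hsum, hden, hsqrt, ← comp_assoc, hinv]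
  simp only [comp_assoc, ← mul_def]
  rw [← cfc_mul _ _ T hden_cont hsqrt_cont, ← cfc_mul _ _ T hsum_cont hinv_cont,
    ← cfc_mul (fun x => (a x + b x) * (√(1 - a x * a x))⁻¹)
      (fun x => (1 + a x * b x)⁻¹ * √(1 - a x * a x)) T (hsum_cont.mul hinv_cont)
      (hden_cont.mul hsqrt_cont)]
  congr 1
  refine cfc_congr fun x hx => ?_
  have hs := hne x hx
  generalize √(1 - a x * a x) = s at hs ⊢
  field_simp

end Mobius

theorem norm_cfc_tanh_mul {A : Type*} [CStarAlgebra A] {a : A} (ha : IsSelfAdjoint a)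
    (ha_spec : spectrum ℝ a ⊆ Set.Icc 0 1) (ha_one : 1 ∈ spectrum ℝ a) (u : ℝ) :
    ‖cfc (fun x => Real.tanh (u * x)) a‖ = Real.tanh |u| := by
  have hle : ∀ x ∈ Set.Icc (0 : ℝ) 1, ‖Real.tanh (u * x)‖ ≤ Real.tanh |u| := by
    rintro x ⟨hx0, hx1⟩
    rw [Real.norm_eq_abs, Real.abs_tanh, abs_mul, abs_of_nonneg hx0]
    exact Real.tanh_le_tanh (mul_le_of_le_one_right (abs_nonneg u) hx1)
  refine le_antisymm
    (norm_cfc_le (Real.tanh_nonneg (abs_nonneg u)) fun x hx => hle x (ha_spec hx)) ?_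
  simpa [Real.abs_tanh] using norm_apply_le_norm_cfc (fun x => Real.tanh (u * x)) a ha_one

theorem spectrum_absOp_subset_Icc (D : K →L[ℂ] H) : spectrum ℝ (absOp D) ⊆ Set.Icc 0 ‖D‖ := by
  rw [absOp, opSqrt, cfc_map_spectrum Real.sqrt _ (isPositive_adjoint_comp_self D).isSelfAdjoint]
  rintro _ ⟨y, hy, rfl⟩
  have hy' := (le_abs_self y).trans (abs_le_norm_of_mem_spectrum hy)
  rw [norm_adjoint_comp_self] at hy'
  exact ⟨Real.sqrt_nonneg y, Real.sqrt_mul_self (norm_nonneg D) ▸ Real.sqrt_le_sqrt hy'⟩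

theorem norm_mem_spectrum_absOp [Nontrivial K] (D : K →L[ℂ] H) :
    ‖D‖ ∈ spectrum ℝ (absOp D) := by
  rw [absOp, opSqrt, cfc_map_spectrum Real.sqrt _ (isPositive_adjoint_comp_self D).isSelfAdjoint]
  refine ⟨‖D‖ * ‖D‖, ?_, Real.sqrt_mul_self (norm_nonneg D)⟩
  rw [← norm_adjoint_comp_self]
  exact CStarAlgebra.norm_mem_spectrum_of_nonneg
    ((nonneg_iff_isPositive _).2 (isPositive_adjoint_comp_self D))

theorem mobius_neg_tanh_tanh {T : K →L[ℂ] K} {J : K →L[ℂ] H} (hT : IsSelfAdjoint T)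
    (hJ : adjoint J ∘L J ∘L T = T) (s t : ℝ) :
    mobius (-(J ∘L cfc (fun x => Real.tanh (s * x)) T)) (J ∘L cfc (fun x => Real.tanh (t * x)) T)
      = J ∘L cfc (fun x => Real.tanh ((t - s) * x)) T := by
  rw [← comp_neg, ← cfc_neg, mobius_comp_cfc hT hJ (by fun_prop) (by fun_prop) (by simp) (by simp)
    (fun x _ => by simpa using Real.abs_tanh_lt_one (s * x)) (fun x _ => ?_)]
  · congr 2
    funext x
    rw [sub_mul, Real.tanh_sub, neg_add_eq_sub, neg_mul, ← sub_eq_add_neg,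
      mul_comm (Real.tanh (s * x))]
  · have hs := abs_lt.1 (Real.abs_tanh_lt_one (s * x))
    have ht := abs_lt.1 (Real.abs_tanh_lt_one (t * x))
    nlinarith

theorem thOp_is_metric_line_general (D J : K →L[ℂ] H) (hD : ‖D‖ = 1)
    (hJ1 : adjoint J ∘L J ∘L absOp D = absOp D) :
    ∀ s t : ℝ,
      mobius (-(J ∘L cfc (fun x : ℝ => Real.tanh (s * x)) (absOp D)))
          (J ∘L cfc (fun x : ℝ => Real.tanh (t * x)) (absOp D))
        = J ∘L cfc (fun x : ℝ => Real.tanh ((t - s) * x)) (absOp D) ∧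
      artanh ‖mobius (-(J ∘L cfc (fun x : ℝ => Real.tanh (s * x)) (absOp D)))
          (J ∘L cfc (fun x : ℝ => Real.tanh (t * x)) (absOp D))‖ = |t - s| := by
  intro s t
  have hT : IsSelfAdjoint (absOp D) := cfc_predicate _ _
  have : Nontrivial K := by
    contrapose! hD
    simp [Subsingleton.elim D 0]
  have hspec : spectrum ℝ (absOp D) ⊆ Set.Icc 0 1 := hD ▸ spectrum_absOp_subset_Icc D
  have hone : 1 ∈ spectrum ℝ (absOp D) := hD ▸ norm_mem_spectrum_absOp D
  rw [mobius_neg_tanh_tanh hT hJ1, norm_comp_eq_of_adjoint_comp_comp_eq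
    (adjoint_comp_comp_cfc hT hJ1 (by fun_prop) (by simp)), norm_cfc_tanh_mul hT hspec hone,
    artanh_tanh]
  exact ⟨rfl, rfl⟩

/-- M_{-Th(sD)}(Th(tD)) = Th((t-s)D); consequently ρ(Th(sD), Th(tD)) = |t-s| for the
hyperbolic metric ρ(A,B) = tanh⁻¹‖M_{-A}(B)‖, i.e. t ↦ Th(tD) is a metric line. -/
theorem thOp_is_metric_line (D J : K →L[ℂ] H) (hD : ‖D‖ = 1)
    (hpolar : D = J ∘L absOp D)
    (hJ1 : adjoint J ∘L J ∘L absOp D = absOp D)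
    (hJ2 : absOp D ∘L (adjoint J ∘L J) = absOp D) :
    ∀ s t : ℝ,
      mobius (-(J ∘L cfc (fun x : ℝ => Real.tanh (s * x)) (absOp D)))
          (J ∘L cfc (fun x : ℝ => Real.tanh (t * x)) (absOp D))
        = J ∘L cfc (fun x : ℝ => Real.tanh ((t - s) * x)) (absOp D) ∧
      artanh ‖mobius (-(J ∘L cfc (fun x : ℝ => Real.tanh (s * x)) (absOp D)))
          (J ∘L cfc (fun x : ℝ => Real.tanh (t * x)) (absOp D))‖ = |t - s| :=
  thOp_is_metric_line_general D J hD hJ1
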